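/- arXiv:1606.00707 — 6 statements merged into one kernel-verified Lean document; each statement's English description precedes it below -/
import Mathlib

section
/- Let V be a finite-dimensional complex vector space with a nondegenerate symmetric or antisymmetric bilinear form, and let 𝔤 = 𝔤(V) be the Lie algebra of endomorphisms antisymmetric with respect to the form. Then the trace pairing (A,B) ↦ tr(AB) restricted to 𝔤 × 𝔤 is nondegenerate. -/
/-!
Write `σ X` for the left adjoint of `X` with respect to the form. As the form is `ε`-symmetric
with `ε = ±1`, adjoint pairs can be swapped, so `X - σ X` is skew for every `X`. Transported
along the duality `V ≃ V*` given by the form, `σ X` is the transpose of `X`, so adjoints have the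
same trace; since `(A * σ X, X * -A)` is an adjoint pair for skew `A`, this gives
`tr (A σX) = -tr (A X)`. Hence `0 = tr (A (X - σX)) = 2 tr (A X)` for all `X`, and `A = 0`
because the trace pairing on all of `End V` is nondegenerate.
-/

open LinearMap

theorem LinearMap.eq_zero_of_forall_trace_mul_eq_zero {R M : Type*} [CommRing R]
    [AddCommGroup M] [Module R M] [Module.Free R M] [Module.Finite R M] {f : Module.End R M}
    (h : ∀ g, trace R M (f * g) = 0) : f = 0 := by
  let b := Module.Free.chooseBasis R M
  apply (toMatrix b b).injective
  rw [map_zero, Matrix.ext_iff_trace_mul_right]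
  intro x
  simpa [trace_eq_matrix_trace R b, toMatrix_mul] using h (Matrix.toLin b b x)

namespace LinearMap.IsAdjointPair

variable {R M : Type*} [CommRing R] [AddCommGroup M] [Module R M]

theorem symm_of_eq_smul_flip {B : LinearMap.BilinForm R M} {ε : R} (hε : ε * ε = 1)
    (hB : ∀ x y, B x y = ε * B y x) {f g : Module.End R M} (h : IsAdjointPair B B f g) :
    IsAdjointPair B B g f := fun x y => by
  rw [hB, ← h, hB (f y), ← mul_assoc, hε, one_mul]

theorem trace_eq {K V : Type*} [Field K] [AddCommGroup V] [Module K V] [FiniteDimensional K V]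
    {B : LinearMap.BilinForm K V} (hB : B.Nondegenerate) {f g : Module.End K V}
    (h : IsAdjointPair B B f g) : trace K V f = trace K V g := by
  have hconj : f = (B.toDual hB).symm.conj (Module.Dual.transpose (R := K) g) := by
    ext x
    apply (B.toDual hB).injective
    ext y
    simpa [LinearEquiv.conj_apply, Module.Dual.transpose_apply, BilinForm.toDual_def] using h x y
  rw [hconj, trace_conj', trace_transpose']

end LinearMap.IsAdjointPair

theorem LinearMap.BilinForm.eq_zero_of_forall_mem_skewAdjointSubmodule_trace_mul_eq_zero
    {K V : Type*} [Field K] [NeZero (2 : K)] [AddCommGroup V] [Module K V]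
    [FiniteDimensional K V] {B : LinearMap.BilinForm K V} (hB : B.Nondegenerate) {ε : K}
    (hε : ε * ε = 1) (hBε : ∀ x y, B x y = ε * B y x) {A : Module.End K V}
    (hA : A ∈ B.skewAdjointSubmodule)
    (htr : ∀ C ∈ B.skewAdjointSubmodule, trace K V (A * C) = 0) : A = 0 := by
  replace hA : IsAdjointPair B B A (-A : Module.End K V) := (B.mem_skewAdjointSubmodule A).mp hA
  refine eq_zero_of_forall_trace_mul_eq_zero fun X => ?_
  set σX := B.leftAdjointOfNondegenerate hB X
  have hσX : IsAdjointPair B B σX X := B.isAdjointPairLeftAdjointOfNondegenerate hB X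
  have hskew : X - σX ∈ B.skewAdjointSubmodule := by
    refine (B.mem_skewAdjointSubmodule _).mpr ?_
    change IsAdjointPair B B (X - σX) (-(X - σX) : Module.End K V)
    rw [neg_sub]
    exact (hσX.symm_of_eq_smul_flip hε hBε).sub hσX
  have hAσX : trace K V (A * σX) = -trace K V (A * X) := by
    rw [(hA.mul hσX).trace_eq hB, mul_neg, map_neg, trace_mul_comm]
  have h2 : (2 : K) * trace K V (A * X) = 0 := by
    rw [← htr _ hskew, mul_sub, map_sub, hAσX]
    ring
  exact (mul_eq_zero.mp h2).resolve_left two_ne_zero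

/-- For a finite-dimensional complex vector space `V` with a nondegenerate
symmetric or antisymmetric bilinear form, the trace pairing `(A,B) ↦ tr(AB)` restricted to
the antisymmetric endomorphisms `𝔤(V)` is nondegenerate. -/
theorem trace_pairing_nondegenerate_on_g
    (V : Type*) [AddCommGroup V] [Module ℂ V] [FiniteDimensional ℂ V]
    (Ω : LinearMap.BilinForm ℂ V) (hΩ : Ω.Nondegenerate)
    (hform : (∀ v w, Ω v w = Ω w v) ∨ (∀ v w, Ω v w = -(Ω w v))) :
    ∀ A : Module.End ℂ V, (∀ v w, Ω (A v) w = -(Ω v (A w))) →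
      (∀ C : Module.End ℂ V, (∀ v w, Ω (C v) w = -(Ω v (C w))) →
        LinearMap.trace ℂ V (A * C) = 0) →
      A = 0 := by
  intro A hA htr
  have mem_g : ∀ C, C ∈ Ω.skewAdjointSubmodule ↔ ∀ v w, Ω (C v) w = -(Ω v (C w)) := by
    simp [IsSkewAdjoint, IsAdjointPair]
  obtain ⟨ε, hε, hΩε⟩ : ∃ ε : ℂ, ε * ε = 1 ∧ ∀ v w, Ω v w = ε * Ω w v := by
    rcases hform with hsymm | hanti
    · exact ⟨1, one_mul 1, by simpa using hsymm⟩
    · exact ⟨-1, by norm_num, by simpa using hanti⟩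
  exact BilinForm.eq_zero_of_forall_mem_skewAdjointSubmodule_trace_mul_eq_zero hΩ hε hΩε
    ((mem_g A).mpr hA) fun C hC => htr C ((mem_g C).mp hC)
end

section
/- Let V be a symplectic vector space over ℂ and B ∈ 𝔭(V) a symmetric endomorphism. Then for every eigenvalue a of B, the dimensions dim(ker((B-a)^l)/ker((B-a)^{l-1})) are even for all l ≥ 1; in particular every generalized eigenspace of B is even-dimensional. -/
/-!
For an `Ω`-self-adjoint `f`, the form `(x, y) ↦ Ω (f x) y` is alternating, and since `Ω` is
nondegenerate its rank is the rank of `f`. Alternating forms have even rank, so `rank f` is even;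
as `dim V` is even too, every `dim ker (B - a)^l` is even, and the claim follows by subtraction.
-/

open Module LinearMap Matrix

namespace LinearMap

theorem IsSelfAdjoint.pow {R M N : Type*} [CommSemiring R] [AddCommMonoid M] [Module R M]
    [AddCommMonoid N] [Module R N] {B : M →ₗ[R] M →ₗ[R] N} {f : Module.End R M}
    (hf : B.IsSelfAdjoint f) (k : ℕ) : B.IsSelfAdjoint ⇑(f ^ k) := by
  induction k with
  | zero => exact isAdjointPair_one
  | succ k ih =>
    change IsAdjointPair B B ⇑(f ^ (k + 1)) ⇑(f ^ (k + 1))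
    nth_rw 2 [pow_succ']
    rw [pow_succ]
    exact ih.mul hf

variable {K V : Type*} [Field K] [AddCommGroup V] [Module K V] [FiniteDimensional K V]

namespace BilinForm

theorem even_finrank_of_isAlt_of_nondegenerate (hK : ringChar K ≠ 2)
    {B : LinearMap.BilinForm K V} (hB : B.IsAlt) (hnd : B.Nondegenerate) :
    Even (finrank K V) := by
  set M := BilinForm.toMatrix (finBasis K V) B
  have hdet : M.det ≠ 0 := (nondegenerate_iff_det_ne_zero _).mp hnd
  have hskew : Mᵀ = -M := by
    ext i j
    exact (LinearMap.IsAlt.neg hB _ _).symm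
  have hsign : M.det = (-1) ^ finrank K V * M.det := by
    simpa [hskew, Matrix.det_neg] using (Matrix.det_transpose M).symm
  refine (neg_one_pow_eq_one_iff_even (Ring.neg_one_ne_one_of_char_ne_two hK)).mp ?_
  exact (mul_eq_right₀ hdet).mp hsign.symm

theorem even_finrank_range_of_isAlt (hK : ringChar K ≠ 2) {B : LinearMap.BilinForm K V}
    (hB : B.IsAlt) : Even (finrank K (range B)) := by
  obtain ⟨C, hC⟩ := (ker B).exists_isCompl
  have hnd : (B.restrict C).Nondegenerate := by
    refine (IsRefl.nondegenerate_iff_separatingLeft (B := B.restrict C)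
      fun x y ↦ hB.isRefl x y).mpr ?_
    rw [separatingLeft_iff_ker_eq_bot, ker_restrict_eq_of_codisjoint hC.symm.codisjoint,
      ← Submodule.disjoint_iff_comap_eq_bot]
    · exact hC.symm.disjoint
    · intro x _ y hy
      rw [hB.eq_iff, mem_ker.mp hy, LinearMap.zero_apply]
  have hC_even :=
    even_finrank_of_isAlt_of_nondegenerate hK (B := B.restrict C) (fun x ↦ hB x) hnd
  have hC_add := Submodule.finrank_add_eq_of_isCompl hC
  have hB_add := finrank_range_add_finrank_ker B
  rwa [show finrank K (range B) = finrank K C by omega]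

end BilinForm

namespace IsSelfAdjoint

variable {Ω : LinearMap.BilinForm K V} {f : Module.End K V}

theorem even_finrank_range (hK : ringChar K ≠ 2) (hΩ : Ω.IsAlt) (hnd : Ω.Nondegenerate)
    (hf : Ω.IsSelfAdjoint f) : Even (finrank K (range f)) := by
  have halt : (Ω ∘ₗ f).IsAlt := fun x ↦ by
    have hskew : Ω (f x) x = -Ω (f x) x := (hf x x).trans (LinearMap.IsAlt.neg hΩ _ _).symm
    exact (Ring.eq_self_iff_eq_zero_of_char_ne_two hK).mp hskew.symm
  have hinj : Function.Injective Ω := ker_eq_bot.mp (separatingLeft_iff_ker_eq_bot.mp hnd.1)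
  rw [(Submodule.equivMapOfInjective _ hinj _).finrank_eq, ← range_comp]
  exact BilinForm.even_finrank_range_of_isAlt hK halt

theorem even_finrank_ker (hK : ringChar K ≠ 2) (hΩ : Ω.IsAlt) (hnd : Ω.Nondegenerate)
    (hf : Ω.IsSelfAdjoint f) : Even (finrank K (ker f)) := by
  have hV := BilinForm.even_finrank_of_isAlt_of_nondegenerate hK hΩ hnd
  have hrange := hf.even_finrank_range hK hΩ hnd
  rw [← finrank_range_add_finrank_ker f] at hV
  exact (Nat.even_add.mp hV).mp hrange

end IsSelfAdjoint

end LinearMap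

theorem symmetric_endo_even_jordan_blocks_general
    (V : Type*) [AddCommGroup V] [Module ℂ V] [FiniteDimensional ℂ V]
    (Ω : LinearMap.BilinForm ℂ V) (hΩ : Ω.Nondegenerate)
    (halt : ∀ v w, Ω v w = -(Ω w v))
    (B : Module.End ℂ V) (hB : ∀ v w, Ω (B v) w = Ω v (B w))
    (a : ℂ) :
    (∀ l : ℕ, 1 ≤ l →
      Even (Module.finrank ℂ ↥(LinearMap.ker ((B - a • 1) ^ l)) -
        Module.finrank ℂ ↥(LinearMap.ker ((B - a • 1) ^ (l - 1))))) ∧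
    Even (Module.finrank ℂ ↥(⨆ k : ℕ, LinearMap.ker ((B - a • 1) ^ k))) := by
  have hchar : ringChar ℂ ≠ 2 := by simp
  have hΩ_alt : Ω.IsAlt := fun v ↦
    (Ring.eq_self_iff_eq_zero_of_char_ne_two hchar).mp (halt v v).symm
  have hN : Ω.IsSelfAdjoint ⇑(B - a • 1) := IsAdjointPair.sub hB (isAdjointPair_one.smul a)
  have h_even (k : ℕ) : Even (finrank ℂ (ker ((B - a • 1) ^ k))) :=
    (hN.pow k).even_finrank_ker hchar hΩ_alt hΩ
  obtain ⟨n, hn⟩ := (B - a • 1).eventually_iSup_ker_pow_eq.exists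
  exact ⟨fun l _ ↦ (h_even l).tsub (h_even (l - 1)), hn ▸ h_even n⟩

/-- Let `V` be a complex symplectic vector space and `B ∈ 𝔭(V)` symmetric with
respect to the symplectic form. Then for every eigenvalue `a` of `B` the successive kernel
quotient dimensions `dim ker((B-a)^l) - dim ker((B-a)^{l-1})` are even for all `l ≥ 1`;
in particular every generalized eigenspace of `B` is even-dimensional. -/
theorem symmetric_endo_even_jordan_blocks
    (V : Type*) [AddCommGroup V] [Module ℂ V] [FiniteDimensional ℂ V]
    (Ω : LinearMap.BilinForm ℂ V) (hΩ : Ω.Nondegenerate)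
    (halt : ∀ v w, Ω v w = -(Ω w v))
    (B : Module.End ℂ V) (hB : ∀ v w, Ω (B v) w = Ω v (B w))
    (a : ℂ) (ha : Module.End.HasEigenvalue B a) :
    (∀ l : ℕ, 1 ≤ l →
      Even (Module.finrank ℂ ↥(LinearMap.ker ((B - a • 1) ^ l)) -
        Module.finrank ℂ ↥(LinearMap.ker ((B - a • 1) ^ (l - 1))))) ∧
    Even (Module.finrank ℂ ↥(⨆ k : ℕ, LinearMap.ker ((B - a • 1) ^ k))) :=
  symmetric_endo_even_jordan_blocks_general V Ω hΩ halt B hB a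
end

section
/- Let V be a symplectic complex vector space and B ∈ 𝔭(V) nilpotent and symmetric with respect to the symplectic form. Then there exist vectors v₁,v₁',...,v_s,v_s' ∈ V and integers d₁,...,d_s ≥ 0 such that the vectors B^a v_l, B^{a'} v_l' (0 ≤ a, a' ≤ d_l, 1 ≤ l ≤ s) form a basis of V, and all pairings among basis vectors vanish except (B^a v_l, B^{d_l - a} v_l') = 1. -/
/-!
Since `B` is self-adjoint and `Ω` is skew, every cyclic subspace is isotropic:
`Ω (Bᵃ x) (Bᶜ x) = Ω (Bᵃ⁺ᶜ x) x` is its own negative. Let `d + 1` be the nilpotency index of `B`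
and `Bᵈ v ≠ 0`. The chain `v, B v, …, Bᵈ v` is linearly independent, so by nondegeneracy some
`v'` has `Ω (Bᵃ v) v' = δ_{a,d}`, hence `Ω (Bᵃ v) (Bᶜ v') = δ_{a+c,d}`. The two chains are then
dual, up to sign, to themselves read backwards, so their span `W` is a nondegenerate `B`-stable
subspace, `V = W ⊕ Wᗮ`, and `Wᗮ` is again nondegenerate and `B`-stable. Induct on `dim V`.
-/

open Module LinearMap Submodule

theorem LinearMap.IsSelfAdjoint.pow_s9 {R M N : Type*} [CommSemiring R] [AddCommMonoid M]
    [Module R M] [AddCommMonoid N] [Module R N] {β : M →ₗ[R] M →ₗ[R] N} {f : Module.End R M}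
    (hf : β.IsSelfAdjoint f) (k : ℕ) : β.IsSelfAdjoint ⇑(f ^ k) := by
  induction k with
  | zero => exact isAdjointPair_one
  | succ k ih =>
    have h := ih.mul hf
    rwa [(Commute.self_pow f k).eq, ← pow_succ] at h

section

variable {K V ι : Type*} [Field K] [AddCommGroup V] [Module K V] {Ω : LinearMap.BilinForm K V}
  {B : Module.End K V}

theorem apply_pow_apply_pow (hB : Ω.IsSelfAdjoint B) (a c : ℕ) (x y : V) :
    Ω ((B ^ a) x) ((B ^ c) y) = Ω ((B ^ (a + c)) x) y := by
  rw [← hB.pow_s9 c, ← Module.End.mul_apply, ← pow_add, add_comm]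

theorem apply_pow_apply_pow_self [NeZero (2 : K)] (hskew : ∀ x y, Ω x y = -Ω y x)
    (hB : Ω.IsSelfAdjoint B) (a c : ℕ) (x : V) : Ω ((B ^ a) x) ((B ^ c) x) = 0 := by
  have h : Ω ((B ^ (a + c)) x) x = -Ω ((B ^ (a + c)) x) x :=
    (hB.pow_s9 _ x x).trans (hskew _ _)
  rw [apply_pow_apply_pow hB]
  exact (mul_eq_zero.mp (by linear_combination h : (2 : K) * _ = 0)).resolve_left two_ne_zero

theorem linearIndependent_pow_apply {d : ℕ} {v : V} (hv : (B ^ d) v ≠ 0)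
    (hv' : (B ^ (d + 1)) v = 0) : LinearIndependent K fun a : Fin (d + 1) => (B ^ (a : ℕ)) v := by
  have hzero : ∀ k, d < k → (B ^ k) v = 0 := fun k hk => by
    rw [← Nat.sub_add_cancel hk, pow_add, Module.End.mul_apply, hv', map_zero]
  refine Fintype.linearIndependent_iff.2 fun g hg a => ?_
  induction a using WellFoundedLT.induction with
  | _ a ih =>
    have h := congrArg (B ^ (d - a)) hg
    rw [map_sum, map_zero, Finset.sum_eq_single a (fun b _ hba => ?_) (by simp)] at h
    · rw [map_smul, ← Module.End.mul_apply, ← pow_add, Nat.sub_add_cancel a.is_le] at h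
      exact (smul_eq_zero.mp h).resolve_right hv
    · rcases lt_or_gt_of_ne hba with hlt | hgt
      · rw [ih b hlt, zero_smul, map_zero]
      · have : (a : ℕ) < b := hgt
        rw [map_smul, ← Module.End.mul_apply, ← pow_add, hzero _ (by omega), smul_zero]

theorem LinearMap.BilinForm.Nondegenerate.exists_apply_eq_ite [FiniteDimensional K V]
    [DecidableEq ι] (hΩ : Ω.Nondegenerate) {x : ι → V} (hx : LinearIndependent K x) (i : ι) :
    ∃ y, ∀ j, Ω (x j) y = if j = i then 1 else 0 := by
  obtain ⟨φ, hφ⟩ := LinearMap.exists_extend ((Basis.span hx).coord i)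
  refine ⟨(Ω.flip.toDual hΩ.flip).symm φ, fun j => ?_⟩
  rw [← flip_apply Ω, BilinForm.apply_toDual_symm_apply]
  simpa [Basis.span_apply, Basis.coord_apply, Finsupp.single_apply] using
    LinearMap.congr_fun hφ (Basis.span hx j)

theorem apply_sum_smul_of_biorthogonal [Fintype ι] [DecidableEq ι] {x y : ι → V}
    (h : ∀ i j, Ω (x i) (y j) = if i = j then 1 else 0) (g : ι → K) (j : ι) :
    Ω (∑ i, g i • x i) (y j) = g j := by
  simp [h]

theorem linearIndependent_of_biorthogonal [Fintype ι] [DecidableEq ι] {x y : ι → V}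
    (h : ∀ i j, Ω (x i) (y j) = if i = j then 1 else 0) : LinearIndependent K x :=
  Fintype.linearIndependent_iff.2 fun g hg j => by
    simpa [hg] using (apply_sum_smul_of_biorthogonal h g j).symm

theorem disjoint_orthogonal_of_biorthogonal [Fintype ι] [DecidableEq ι] (hrefl : Ω.IsRefl)
    {x y : ι → V} (hy : ∀ j, y j ∈ span K (Set.range x))
    (h : ∀ i j, Ω (x i) (y j) = if i = j then 1 else 0) :
    Disjoint (span K (Set.range x)) (Ω.orthogonal (span K (Set.range x))) := by
  rw [Submodule.disjoint_def]
  intro z hz hz'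
  obtain ⟨g, rfl⟩ := (mem_span_range_iff_exists_fun K).1 hz
  have hg : g = 0 := funext fun j => by
    rw [← apply_sum_smul_of_biorthogonal h g j]
    exact hrefl _ _ (hz' _ (hy j))
  simp [hg]

theorem orthogonal_le_comap_of_isSelfAdjoint (hB : Ω.IsSelfAdjoint B) {W : Submodule K V}
    (hW : W ≤ W.comap B) : Ω.orthogonal W ≤ (Ω.orthogonal W).comap B :=
  fun u hu w hw => (hB w u).symm.trans (hu _ (hW hw))

theorem nondegenerate_restrict_orthogonal [FiniteDimensional K V] (hΩ : Ω.Nondegenerate)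
    (hrefl : Ω.IsRefl) {W : Submodule K V} (hW : IsCompl W (Ω.orthogonal W)) :
    (Ω.restrict (Ω.orthogonal W)).Nondegenerate := by
  rw [BilinForm.restrict_nondegenerate_iff_isCompl_orthogonal hrefl,
    BilinForm.orthogonal_orthogonal hΩ hrefl]
  exact hW.symm

def pairChain (B : Module.End K V) (v v' : V) (d : ℕ) : Fin (d + 1) ⊕ Fin (d + 1) → V :=
  Sum.elim (fun a => (B ^ (a : ℕ)) v) (fun a => (B ^ (a : ℕ)) v')

def chainSpan (B : Module.End K V) (v v' : V) (d : ℕ) : Submodule K V :=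
  span K (Set.range (pairChain B v v' d))

/-- For a chain pair, the family `Ω`-dual to `pairChain`. -/
def pairPartner (B : Module.End K V) (v v' : V) (d : ℕ) : Fin (d + 1) ⊕ Fin (d + 1) → V :=
  Sum.elim (fun a => pairChain B v v' d (.inr a.rev)) (fun a => -pairChain B v v' d (.inl a.rev))

def IsChainPair (Ω : LinearMap.BilinForm K V) (B : Module.End K V) (v v' : V) (d : ℕ) : Prop :=
  ∀ a c, a ≤ d → c ≤ d → Ω ((B ^ a) v) ((B ^ c) v') = if a + c = d then 1 else 0

theorem pairPartner_mem_chainSpan (v v' : V) (d : ℕ) (j : Fin (d + 1) ⊕ Fin (d + 1)) :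
    pairPartner B v v' d j ∈ chainSpan B v v' d := by
  cases j with
  | inl a => exact subset_span ⟨.inr a.rev, rfl⟩
  | inr a => exact neg_mem (subset_span ⟨.inl a.rev, rfl⟩)

theorem pow_apply_mem_chainSpan {d : ℕ} (hd : B ^ (d + 1) = 0) (v v' : V) (k : ℕ) :
    (B ^ k) v ∈ chainSpan B v v' d ∧ (B ^ k) v' ∈ chainSpan B v v' d := by
  rcases le_or_gt k d with hk | hk
  · exact ⟨subset_span ⟨.inl ⟨k, by omega⟩, rfl⟩, subset_span ⟨.inr ⟨k, by omega⟩, rfl⟩⟩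
  · rw [pow_eq_zero_of_le hk hd]
    exact ⟨zero_mem _, zero_mem _⟩

theorem chainSpan_le_comap {d : ℕ} (hd : B ^ (d + 1) = 0) (v v' : V) :
    chainSpan B v v' d ≤ (chainSpan B v v' d).comap B := by
  rw [chainSpan, span_le]
  rintro _ ⟨i | i, rfl⟩ <;>
    simp only [pairChain, Sum.elim_inl, Sum.elim_inr, SetLike.mem_coe, mem_comap,
      ← Module.End.mul_apply, ← pow_succ']
  exacts [(pow_apply_mem_chainSpan hd v v' _).1, (pow_apply_mem_chainSpan hd v v' _).2]

namespace IsChainPair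

variable {v v' : V} {d : ℕ}

theorem left_ne_zero (h : IsChainPair Ω B v v' d) : v ≠ 0 := by
  rintro rfl
  simpa using h d 0 le_rfl (Nat.zero_le d)

theorem right_ne_zero (h : IsChainPair Ω B v v' d) : v' ≠ 0 := by
  rintro rfl
  simpa using h d 0 le_rfl (Nat.zero_le d)

theorem apply_pairChain_pairPartner [NeZero (2 : K)] (hskew : ∀ x y, Ω x y = -Ω y x)
    (hB : Ω.IsSelfAdjoint B) (h : IsChainPair Ω B v v' d) (i j : Fin (d + 1) ⊕ Fin (d + 1)) :
    Ω (pairChain B v v' d i) (pairPartner B v v' d j) = if i = j then 1 else 0 := by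
  have hrev : ∀ a b : Fin (d + 1), ((b : ℕ) + (d - a) = d ↔ b = a) := fun a b => by
    have := a.is_le
    rw [Fin.ext_iff]
    omega
  cases i with
  | inl b =>
    cases j with
    | inl a => simpa [pairChain, pairPartner, hrev] using h b a.rev b.is_le a.rev.is_le
    | inr a => simp [pairChain, pairPartner, apply_pow_apply_pow_self hskew hB]
  | inr b =>
    cases j with
    | inl a => simp [pairChain, pairPartner, apply_pow_apply_pow_self hskew hB]
    | inr a =>
      simp only [pairChain, pairPartner, Sum.elim_inl, Sum.elim_inr, Sum.inr.injEq, map_neg]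
      rw [← hskew, h _ _ a.rev.is_le b.is_le, add_comm]
      simp [hrev]

theorem isCompl_orthogonal [FiniteDimensional K V] [NeZero (2 : K)]
    (hskew : ∀ x y, Ω x y = -Ω y x) (hB : Ω.IsSelfAdjoint B) (h : IsChainPair Ω B v v' d) :
    IsCompl (chainSpan B v v' d) (Ω.orthogonal (chainSpan B v v' d)) := by
  have hrefl : Ω.IsRefl := fun x y hxy => by rw [hskew, hxy, neg_zero]
  exact (BilinForm.isCompl_orthogonal_iff_disjoint hrefl).2 <|
    disjoint_orthogonal_of_biorthogonal hrefl (pairPartner_mem_chainSpan v v' d)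
      (h.apply_pairChain_pairPartner hskew hB)

theorem finrank_orthogonal_lt [FiniteDimensional K V] (h : IsChainPair Ω B v v' d)
    (hW : IsCompl (chainSpan B v v' d) (Ω.orthogonal (chainSpan B v v' d))) :
    finrank K (Ω.orthogonal (chainSpan B v v' d)) < finrank K V := by
  refine Submodule.finrank_lt fun htop => h.left_ne_zero ?_
  have hv : v ∈ chainSpan B v v' d := subset_span ⟨.inl 0, by simp [pairChain]⟩
  exact (Submodule.eq_bot_iff _).mp (disjoint_top.mp (htop ▸ hW.disjoint)) v hv

end IsChainPair

theorem exists_isChainPair [FiniteDimensional K V] (hΩ : Ω.Nondegenerate)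
    (hB : Ω.IsSelfAdjoint B) {d : ℕ} (hd : B ^ (d + 1) = 0) (hd' : B ^ d ≠ 0) :
    ∃ v v', IsChainPair Ω B v v' d := by
  obtain ⟨v, hv⟩ : ∃ v, (B ^ d) v ≠ 0 := by
    by_contra! h
    exact hd' (LinearMap.ext h)
  obtain ⟨v', hv'⟩ :=
    hΩ.exists_apply_eq_ite (linearIndependent_pow_apply hv (by rw [hd]; rfl)) (Fin.last d)
  refine ⟨v, v', fun a c ha hc => ?_⟩
  rw [apply_pow_apply_pow hB]
  rcases le_or_gt (a + c) d with h | h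
  · simpa [Fin.ext_iff] using hv' ⟨a + c, by omega⟩
  · rw [pow_eq_zero_of_le h hd]
    simp [h.ne']

def chains (B : Module.End K V) (v v' : ι → V) (d : ι → ℕ) :
    (Σ l, Fin (d l + 1) ⊕ Fin (d l + 1)) → V :=
  fun p => pairChain B (v p.1) (v' p.1) (d p.1) p.2

theorem iSup_chainSpan_eq_span_range_chains (v v' : ι → V) (d : ι → ℕ) :
    ⨆ l, chainSpan B (v l) (v' l) (d l) = span K (Set.range (chains B v v' d)) := by
  rw [Set.range_sigma_eq_iUnion_range, span_iUnion]
  rfl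

structure IsSymplecticChains (Ω : LinearMap.BilinForm K V) (B : Module.End K V)
    (v v' : ι → V) (d : ι → ℕ) : Prop where
  isChainPair : ∀ l, IsChainPair Ω B (v l) (v' l) (d l)
  orthogonal : ∀ l m, l ≠ m → ∀ i j,
    Ω (pairChain B (v l) (v' l) (d l) i) (pairChain B (v m) (v' m) (d m) j) = 0

namespace IsSymplecticChains

variable {v v' : ι → V} {d : ι → ℕ}

theorem linearIndependent [Fintype ι] [DecidableEq ι] [NeZero (2 : K)]
    (hskew : ∀ x y, Ω x y = -Ω y x) (hB : Ω.IsSelfAdjoint B) (h : IsSymplecticChains Ω B v v' d) :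
    LinearIndependent K (chains B v v' d) := by
  refine linearIndependent_of_biorthogonal (Ω := Ω)
    (y := fun p => pairPartner B (v p.1) (v' p.1) (d p.1) p.2) ?_
  rintro ⟨l, i⟩ ⟨m, j⟩
  by_cases hlm : l = m
  · subst hlm
    simpa [chains] using (h.isChainPair l).apply_pairChain_pairPartner hskew hB i j
  · rw [if_neg fun e => hlm (congrArg Sigma.fst e)]
    cases j <;> simp [chains, pairPartner, h.orthogonal l m hlm]

theorem apply_pow_left_left [NeZero (2 : K)] (hskew : ∀ x y, Ω x y = -Ω y x)
    (hB : Ω.IsSelfAdjoint B) (h : IsSymplecticChains Ω B v v' d) (l m : ι) (a c : ℕ)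
    (ha : a ≤ d l) (hc : c ≤ d m) : Ω ((B ^ a) (v l)) ((B ^ c) (v m)) = 0 := by
  by_cases hlm : l = m
  · subst hlm
    exact apply_pow_apply_pow_self hskew hB a c _
  · exact h.orthogonal l m hlm (.inl ⟨a, by omega⟩) (.inl ⟨c, by omega⟩)

theorem apply_pow_right_right [NeZero (2 : K)] (hskew : ∀ x y, Ω x y = -Ω y x)
    (hB : Ω.IsSelfAdjoint B) (h : IsSymplecticChains Ω B v v' d) (l m : ι) (a c : ℕ)
    (ha : a ≤ d l) (hc : c ≤ d m) : Ω ((B ^ a) (v' l)) ((B ^ c) (v' m)) = 0 := by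
  by_cases hlm : l = m
  · subst hlm
    exact apply_pow_apply_pow_self hskew hB a c _
  · exact h.orthogonal l m hlm (.inr ⟨a, by omega⟩) (.inr ⟨c, by omega⟩)

theorem apply_pow_left_right [DecidableEq ι] (h : IsSymplecticChains Ω B v v' d) (l m : ι)
    (a c : ℕ) (ha : a ≤ d l) (hc : c ≤ d m) :
    Ω ((B ^ a) (v l)) ((B ^ c) (v' m)) = if l = m ∧ a + c = d l then 1 else 0 := by
  by_cases hlm : l = m
  · subst hlm
    simpa using h.isChainPair l a c ha hc
  · rw [if_neg fun e => hlm e.1]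
    exact h.orthogonal l m hlm (.inl ⟨a, by omega⟩) (.inr ⟨c, by omega⟩)

theorem cons {s : ℕ} {v v' : Fin s → V} {d : Fin s → ℕ} {v₀ v₀' : V} {d₀ : ℕ}
    (hrefl : Ω.IsRefl) (h : IsSymplecticChains Ω B v v' d) (h₀ : IsChainPair Ω B v₀ v₀' d₀)
    (horth : ∀ l i j, Ω (pairChain B v₀ v₀' d₀ i) (pairChain B (v l) (v' l) (d l) j) = 0) :
    IsSymplecticChains Ω B (Fin.cons v₀ v : Fin (s + 1) → V) (Fin.cons v₀' v' : Fin (s + 1) → V)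
      (Fin.cons d₀ d : Fin (s + 1) → ℕ) where
  isChainPair l := Fin.cases h₀ h.isChainPair l
  orthogonal l m hlm := by
    cases l using Fin.cases <;> cases m using Fin.cases
    · exact absurd rfl hlm
    · exact horth _
    · exact fun i j => hrefl _ _ (horth _ j i)
    · exact h.orthogonal _ _ fun e => hlm (congrArg Fin.succ e)

end IsSymplecticChains

section Restrict

variable {U : Submodule K V} (hU : ∀ x ∈ U, B x ∈ U)

theorem coe_pow_restrict_apply (k : ℕ) (x : U) : ((B.restrict hU ^ k) x : V) = (B ^ k) x := by
  rw [Module.End.pow_restrict]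
  rfl

theorem coe_pairChain_restrict (u u' : U) (d : ℕ) (i : Fin (d + 1) ⊕ Fin (d + 1)) :
    ((pairChain (B.restrict hU) u u' d i : U) : V) = pairChain B u u' d i := by
  cases i <;> exact coe_pow_restrict_apply hU _ _

theorem map_chainSpan_restrict (u u' : U) (d : ℕ) :
    (chainSpan (B.restrict hU) u u' d).map U.subtype = chainSpan B u u' d := by
  rw [chainSpan, Submodule.map_span, ← Set.range_comp]
  exact congrArg _ (congrArg _ (funext (coe_pairChain_restrict hU u u' d)))

theorem IsSymplecticChains.of_restrict {v v' : ι → U} {d : ι → ℕ}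
    (h : IsSymplecticChains (Ω.restrict U) (B.restrict hU) v v' d) :
    IsSymplecticChains Ω B (fun l => (v l : V)) (fun l => (v' l : V)) d where
  isChainPair l a c ha hc := by
    rw [← coe_pow_restrict_apply hU, ← coe_pow_restrict_apply hU]
    exact h.isChainPair l a c ha hc
  orthogonal l m hlm i j := by
    rw [← coe_pairChain_restrict hU, ← coe_pairChain_restrict hU]
    exact h.orthogonal l m hlm i j

end Restrict

theorem exists_isSymplecticChains [FiniteDimensional K V] [NeZero (2 : K)]
    (hΩ : Ω.Nondegenerate) (hskew : ∀ x y, Ω x y = -Ω y x) (hB : Ω.IsSelfAdjoint B)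
    (hnil : IsNilpotent B) :
    ∃ (s : ℕ) (v v' : Fin s → V) (d : Fin s → ℕ),
      IsSymplecticChains Ω B v v' d ∧ ⨆ l, chainSpan B (v l) (v' l) (d l) = ⊤ := by
  induction hn : finrank K V using Nat.strong_induction_on generalizing V with
  | _ n ih =>
  rcases subsingleton_or_nontrivial V with hV | hV
  · exact ⟨0, finZeroElim, finZeroElim, finZeroElim, ⟨finZeroElim, finZeroElim⟩,
      Subsingleton.elim _ _⟩
  have hrefl : Ω.IsRefl := fun x y hxy => by rw [hskew, hxy, neg_zero]
  obtain ⟨d, hd⟩ : ∃ d, nilpotencyClass B = d + 1 :=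
    Nat.exists_eq_add_one.mpr (pos_nilpotencyClass_iff.mpr hnil)
  have hBd : B ^ (d + 1) = 0 := hd ▸ pow_nilpotencyClass hnil
  obtain ⟨v₀, v₀', h₀⟩ :=
    exists_isChainPair hΩ hB hBd (by simpa [hd] using pow_pred_nilpotencyClass hnil)
  set W := chainSpan B v₀ v₀' d
  have hW : IsCompl W (Ω.orthogonal W) := h₀.isCompl_orthogonal hskew hB
  have hU : ∀ x ∈ Ω.orthogonal W, B x ∈ Ω.orthogonal W :=
    orthogonal_le_comap_of_isSelfAdjoint hB (chainSpan_le_comap hBd v₀ v₀')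
  obtain ⟨s, v, v', e, h, hspan⟩ := ih _ (hn ▸ h₀.finrank_orthogonal_lt hW)
    (nondegenerate_restrict_orthogonal hΩ hrefl hW) (fun x y => hskew x y) (B := B.restrict hU)
    (fun x y => hB x y) (Module.End.isNilpotent.restrict hU hnil) rfl
  refine ⟨s + 1, Fin.cons v₀ fun l => v l, Fin.cons v₀' fun l => v' l, Fin.cons d e,
    (h.of_restrict hU).cons hrefl h₀ fun l i j => ?_, ?_⟩
  · rw [← coe_pairChain_restrict hU]
    exact (pairChain (B.restrict hU) (v l) (v' l) (e l) j).2 _ (subset_span ⟨i, rfl⟩)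
  · have hUspan : ⨆ l, chainSpan B (v l : V) (v' l) (e l) = Ω.orthogonal W := by
      simp only [← map_chainSpan_restrict hU, ← Submodule.map_iSup, hspan, map_subtype_top]
    refine eq_top_iff.2 (hW.sup_eq_top ▸ sup_le (le_iSup_of_le 0 le_rfl) ?_)
    exact hUspan.ge.trans (iSup_le fun l => le_iSup_of_le l.succ le_rfl)

end

/-- Let `V` be a complex symplectic vector space and `B ∈ 𝔭(V)` nilpotent and
symmetric with respect to the symplectic form. Then there exist nonzero vectors
`v₁,v₁',…,v_s,v_s'` and integers `d₁,…,d_s ≥ 0` such that the vectors `B^a v_l`,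
`B^{a'} v_l'` (`0 ≤ a, a' ≤ d_l`) form a basis of `V`, and all pairings among the basis
vectors vanish except `(B^a v_l, B^{d_l−a} v_l') = 1`. -/
theorem nilpotent_symmetric_symplectic_normal_form
    (V : Type*) [AddCommGroup V] [Module ℂ V] [FiniteDimensional ℂ V]
    (Ω : LinearMap.BilinForm ℂ V) (hΩ : Ω.Nondegenerate)
    (halt : ∀ v w, Ω v w = -(Ω w v))
    (B : Module.End ℂ V) (hB : ∀ v w, Ω (B v) w = Ω v (B w))
    (hnil : IsNilpotent B) :
    ∃ (s : ℕ) (v v' : Fin s → V) (d : Fin s → ℕ),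
      (∀ l, v l ≠ 0) ∧ (∀ l, v' l ≠ 0) ∧
      (∃ b : Module.Basis ((Σ l : Fin s, Fin (d l + 1)) ⊕ (Σ l : Fin s, Fin (d l + 1))) ℂ V,
        (∀ (l : Fin s) (a : Fin (d l + 1)), b (Sum.inl ⟨l, a⟩) = (B ^ (a : ℕ)) (v l)) ∧
        (∀ (l : Fin s) (a : Fin (d l + 1)), b (Sum.inr ⟨l, a⟩) = (B ^ (a : ℕ)) (v' l))) ∧
      (∀ (l m : Fin s) (a c : ℕ), a ≤ d l → c ≤ d m →
        Ω ((B ^ a) (v l)) ((B ^ c) (v m)) = 0) ∧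
      (∀ (l m : Fin s) (a c : ℕ), a ≤ d l → c ≤ d m →
        Ω ((B ^ a) (v' l)) ((B ^ c) (v' m)) = 0) ∧
      (∀ (l m : Fin s) (a c : ℕ), a ≤ d l → c ≤ d m →
        Ω ((B ^ a) (v l)) ((B ^ c) (v' m)) = if l = m ∧ a + c = d l then 1 else 0) := by
  obtain ⟨s, v, v', d, h, hspan⟩ := exists_isSymplecticChains hΩ halt hB hnil
  let b := (Basis.mk (h.linearIndependent halt hB)
    (by rw [← iSup_chainSpan_eq_span_range_chains, hspan])).reindex (Equiv.sigmaSumDistrib _ _)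
  refine ⟨s, v, v', d, fun l => (h.isChainPair l).left_ne_zero,
    fun l => (h.isChainPair l).right_ne_zero, ⟨b, fun l a => ?_, fun l a => ?_⟩,
    h.apply_pow_left_left halt hB, h.apply_pow_right_right halt hB, h.apply_pow_left_right⟩
  all_goals simp only [b, Basis.reindex_apply, Basis.mk_apply]; rfl
end

section
/- Let V be a finite-dimensional complex vector space with a nondegenerate symmetric or antisymmetric form, G(V) the group of linear automorphisms preserving the form, and B ∈ 𝔭(V). Then the G(V)-conjugacy orbit of B equals the intersection of the GL(V)-conjugacy orbit of B with 𝔭(V); i.e., any A ∈ 𝔭(V) conjugate to B by some element of GL(V) is conjugate to B by an element of G(V). -/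
/-!
If `g B = A g`, the Gram operator `M = g† g` (with `†` the `Ω`-adjoint) is invertible,
self-adjoint and commutes with `B`. Its minimal polynomial has no root at `0`, so `X` is a
square modulo it: Hensel's lemma lifts a square root of each root `λ` to a square root of `X`
modulo `(X - λ)ᵐ`, and the Chinese remainder theorem glues these. Hence `M = S²` with `S` a
polynomial in `M`; such an `S` is invertible, self-adjoint and commutes with `B`, and `g S⁻¹`
is an isometry that still conjugates `B` to `A`.
-/

open Polynomial Function LinearMap

namespace Polynomial

theorem exists_pow_dvd_eval_of_dvd_eval {R : Type*} [CommRing R] {P : R[X]} {g q : R}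
    (hq : g ∣ P.eval q) (hq' : IsCoprime (P.derivative.eval q) g) (k : ℕ) :
    ∃ q', g ^ k ∣ P.eval q' := by
  set π := Ideal.Quotient.mk (Ideal.span {g ^ k})
  have hπ (r : R) (Q : R[X]) : aeval (π r) Q = π (Q.eval r) := by
    rw [show π r = algebraMap R _ r from rfl, aeval_algebraMap_apply, coe_aeval_eq_eval]
    rfl
  have hnil : IsNilpotent (aeval (π q) P) := by
    obtain ⟨c, hc⟩ := hq
    refine ⟨k, ?_⟩
    rw [hπ, ← map_pow, Ideal.Quotient.eq_zero_iff_mem, Ideal.mem_span_singleton, hc, mul_pow]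
    exact dvd_mul_right _ _
  have hunit : IsUnit (aeval (π q) (derivative P)) := by
    obtain ⟨a, b, hab⟩ := hq'.pow_right (n := k)
    refine .of_mul_eq_one_right (π a) ?_
    rw [hπ, ← map_mul, ← sub_eq_zero, ← map_one π, ← map_sub, Ideal.Quotient.eq_zero_iff_mem,
      Ideal.mem_span_singleton, ← hab]
    exact ⟨-b, by ring⟩
  obtain ⟨r, ⟨-, hr⟩, -⟩ := existsUnique_nilpotent_sub_and_aeval_eq_zero hnil hunit
  obtain ⟨q', rfl⟩ := Ideal.Quotient.mk_surjective r
  refine ⟨q', ?_⟩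
  rwa [hπ, Ideal.Quotient.eq_zero_iff_mem, Ideal.mem_span_singleton] at hr

theorem exists_prod_dvd_eval {R ι : Type*} [CommRing R] (P : R[X]) (s : Finset ι) (f : ι → R)
    (hf : (s : Set ι).Pairwise (IsCoprime on f)) (hP : ∀ i ∈ s, ∃ q, f i ∣ P.eval q) :
    ∃ p, ∏ i ∈ s, f i ∣ P.eval p := by
  classical
  induction s using Finset.induction_on with
  | empty => exact ⟨0, by simp⟩
  | insert a s ha ih =>
    rw [Finset.coe_insert, Set.pairwise_insert] at hf
    obtain ⟨p, hp⟩ := ih hf.1 fun i hi => hP i (Finset.mem_insert_of_mem hi)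
    obtain ⟨q, hq⟩ := hP a (Finset.mem_insert_self a s)
    obtain ⟨u, v, huv⟩ : IsCoprime (f a) (∏ i ∈ s, f i) :=
      IsCoprime.prod_right fun i hi => (hf.2 i hi fun h => ha (h ▸ hi)).1
    set p' := q * (v * ∏ i ∈ s, f i) + p * (u * f a)
    have h₁ : f a ∣ P.eval p' := by
      have : f a ∣ p' - q := ⟨(p - q) * u, by linear_combination q * huv⟩
      simpa using dvd_add (this.trans (sub_dvd_eval_sub p' q P)) hq
    have h₂ : ∏ i ∈ s, f i ∣ P.eval p' := by
      have : ∏ i ∈ s, f i ∣ p' - p := ⟨(q - p) * v, by linear_combination p * huv⟩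
      simpa using dvd_add (this.trans (sub_dvd_eval_sub p' p P)) hp
    refine ⟨p', ?_⟩
    rw [Finset.prod_insert ha]
    exact IsCoprime.mul_dvd ⟨u, v, huv⟩ h₁ h₂

theorem exists_dvd_sq_sub_X {K : Type*} [Field K] [IsAlgClosed K] [NeZero (2 : K)]
    {μ : K[X]} (hμ : μ ≠ 0) (h0 : ¬ μ.IsRoot 0) : ∃ p : K[X], μ ∣ p ^ 2 - X := by
  classical
  -- `X ^ 2 - C X : K[X][X]` is `Y ^ 2 - X` with coefficients in `K[X]`.
  have hlocal (l : K) (hl : l ∈ μ.roots.toFinset) :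
      ∃ q, (X - C l) ^ μ.roots.count l ∣ (X ^ 2 - C X : K[X][X]).eval q := by
    have hl0 : l ≠ 0 := by
      rintro rfl
      exact h0 (isRoot_of_mem_roots (Multiset.mem_toFinset.mp hl))
    obtain ⟨c, hc⟩ := IsAlgClosed.exists_pow_nat_eq l two_pos
    have hc0 : c ≠ 0 := by rintro rfl; simp_all
    refine exists_pow_dvd_eval_of_dvd_eval (q := C c) ⟨-1, by simp [← C_pow, hc]⟩ ?_ _
    have hu : IsUnit (C (2 * c)) := isUnit_C.mpr (mul_ne_zero two_ne_zero hc0).isUnit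
    exact ⟨↑hu.unit⁻¹, 0, by simp [C_mul, one_add_one_eq_two, C_ofNat]⟩
  obtain ⟨p, hp⟩ := exists_prod_dvd_eval _ μ.roots.toFinset _
    (fun a _ b _ hab => (pairwise_coprime_X_sub_C injective_id hab).pow) hlocal
  refine ⟨p, ?_⟩
  rw [← C_leadingCoeff_mul_prod_multiset_X_sub_C (IsAlgClosed.card_roots_eq_natDegree (p := μ)),
    (isUnit_C.mpr (leadingCoeff_ne_zero.mpr hμ).isUnit).mul_left_dvd,
    Finset.prod_multiset_map_count]
  simpa using hp

end Polynomial

theorem exists_aeval_sq_eq_of_isUnit {K A : Type*} [Field K] [IsAlgClosed K] [NeZero (2 : K)]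
    [Ring A] [Algebra K A] {a : A} (ha : IsIntegral K a) (hu : IsUnit a) :
    ∃ p : K[X], aeval a p ^ 2 = a := by
  have h0 : ¬ (minpoly K a).IsRoot 0 := by
    intro h
    rw [IsRoot.def, ← coeff_zero_eq_eval_zero] at h
    obtain ⟨q, hq⟩ := X_dvd_iff.mpr h
    have hq0 : q ≠ 0 := by rintro rfl; exact minpoly.ne_zero ha (by simpa using hq)
    have hdeg := minpoly.degree_le_of_ne_zero K a hq0 <| by
      simpa [hq, hu.mul_right_eq_zero] using minpoly.aeval K a
    rw [hq, mul_comm] at hdeg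
    exact (degree_lt_degree_mul_X hq0).not_ge hdeg
  obtain ⟨p, hp⟩ := exists_dvd_sq_sub_X (minpoly.ne_zero ha) h0
  exact ⟨p, by simpa [sub_eq_zero] using minpoly.dvd_iff.mp hp⟩

namespace LinearMap

section CommRing

variable {R M : Type*} [CommRing R] [AddCommGroup M] [Module R M] {Ω : LinearMap.BilinForm R M}

theorem IsAdjointPair.swap (hform : (∀ v w, Ω v w = Ω w v) ∨ (∀ v w, Ω v w = -(Ω w v)))
    {f g : M → M} (h : IsAdjointPair Ω Ω f g) : IsAdjointPair Ω Ω g f := by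
  intro x y
  rcases hform with hΩ | hΩ
  · rw [hΩ, ← h, hΩ]
  · rw [hΩ, ← h, hΩ, neg_neg]

theorem IsAdjointPair.aeval {f : Module.End R M} (hf : IsAdjointPair Ω Ω f f) (p : R[X]) :
    IsAdjointPair Ω Ω (Polynomial.aeval f p) (Polynomial.aeval f p) := by
  induction p using Polynomial.induction_on with
  | C a =>
    simpa only [aeval_C, Module.algebraMap_end_eq_smul_id, coe_smul, id_coe]
      using isAdjointPair_id.smul a
  | add p q hp hq =>
    rw [map_add]
    exact hp.add hq
  | monomial n a ih =>
    have hcomm : Commute f (Polynomial.aeval f (C a * X ^ n)) :=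
      Algebra.commute_of_mem_adjoin_self (aeval_mem_adjoin_singleton R f)
    rw [pow_succ, ← mul_assoc, map_mul, aeval_X]
    simpa only [hcomm.eq] using ih.mul hf

end CommRing

namespace BilinForm

variable {K V : Type*} [Field K] [AddCommGroup V] [Module K V] [FiniteDimensional K V]
  {Ω : LinearMap.BilinForm K V} (hΩ : Ω.Nondegenerate)
include hΩ

theorem isUnit_leftAdjointOfNondegenerate {g : Module.End K V} (hg : IsUnit g) :
    IsUnit (Ω.leftAdjointOfNondegenerate hΩ g) := by
  have key (f h : Module.End K V) (hfh : h * f = 1) :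
      Ω.leftAdjointOfNondegenerate hΩ f * Ω.leftAdjointOfNondegenerate hΩ h = 1 :=
    Ω.isAdjointPair_unique_of_nondegenerate hΩ 1 _ _
      (hfh ▸ (Ω.isAdjointPairLeftAdjointOfNondegenerate hΩ f).mul
        (Ω.isAdjointPairLeftAdjointOfNondegenerate hΩ h))
      isAdjointPair_one
  obtain ⟨u, rfl⟩ := hg
  exact ⟨⟨_, _, key _ _ u.inv_mul, key _ _ u.mul_inv⟩, rfl⟩

theorem commute_leftAdjointOfNondegenerate_mul_self {A B g : Module.End K V}
    (hA : IsAdjointPair Ω Ω A A) (hB : IsAdjointPair Ω Ω B B) (hg : g * B = A * g) :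
    Commute (Ω.leftAdjointOfNondegenerate hΩ g * g) B := by
  set g' := Ω.leftAdjointOfNondegenerate hΩ g
  have hg' : IsAdjointPair Ω Ω g' g := Ω.isAdjointPairLeftAdjointOfNondegenerate hΩ g
  have hAB : g' * A = B * g' :=
    Ω.isAdjointPair_unique_of_nondegenerate hΩ (g * B) _ _ (hg ▸ hg'.mul hA) (hB.mul hg')
  calc g' * g * B = g' * A * g := by rw [mul_assoc, hg, mul_assoc]
    _ = B * (g' * g) := by rw [hAB, mul_assoc]

theorem exists_sqrt_leftAdjointOfNondegenerate_mul_self [IsAlgClosed K] [NeZero (2 : K)]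
    (hform : (∀ v w, Ω v w = Ω w v) ∨ (∀ v w, Ω v w = -(Ω w v)))
    {g : Module.End K V} (hg : IsUnit g) :
    ∃ S : Module.End K V, IsUnit S ∧ IsAdjointPair Ω Ω S S ∧
      S ^ 2 = Ω.leftAdjointOfNondegenerate hΩ g * g ∧
      ∀ B, Commute (Ω.leftAdjointOfNondegenerate hΩ g * g) B → Commute S B := by
  set g' := Ω.leftAdjointOfNondegenerate hΩ g
  have hg' : IsAdjointPair Ω Ω g' g := Ω.isAdjointPairLeftAdjointOfNondegenerate hΩ g
  have hM : IsUnit (g' * g) := (isUnit_leftAdjointOfNondegenerate hΩ hg).mul hg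
  obtain ⟨p, hp⟩ := exists_aeval_sq_eq_of_isUnit (IsIntegral.of_finite K (g' * g)) hM
  refine ⟨aeval (g' * g) p, ((Commute.refl _).isUnit_mul_iff.mp (by rwa [← sq, hp])).1,
    (hg'.mul (hg'.swap hform)).aeval p, hp, fun B hB => ?_⟩
  exact (Algebra.commute_of_mem_adjoin_singleton_of_commute
    (aeval_mem_adjoin_singleton K _) hB.symm).symm

end BilinForm

end LinearMap

/-- Let `V` be a finite-dimensional complex vector space with a nondegenerate
symmetric or antisymmetric bilinear form and `A, B ∈ 𝔭(V)`. Then `A` and `B` are conjugate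
under `GL(V)` if and only if they are conjugate under the isometry group `G(V)` of the form;
i.e. `G(V)·B = GL(V)·B ∩ 𝔭(V)`. -/
theorem isometry_orbit_eq_gl_orbit_inter_p
    (V : Type*) [AddCommGroup V] [Module ℂ V] [FiniteDimensional ℂ V]
    (Ω : LinearMap.BilinForm ℂ V) (hΩ : Ω.Nondegenerate)
    (hform : (∀ v w, Ω v w = Ω w v) ∨ (∀ v w, Ω v w = -(Ω w v)))
    (A B : Module.End ℂ V)
    (hA : ∀ v w, Ω (A v) w = Ω v (A w))
    (hB : ∀ v w, Ω (B v) w = Ω v (B w)) :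
    (∃ g : V ≃ₗ[ℂ] V, ∀ v, g (B v) = A (g v)) ↔
    (∃ g : V ≃ₗ[ℂ] V, (∀ v w, Ω (g v) (g w) = Ω v w) ∧ ∀ v, g (B v) = A (g v)) := by
  refine ⟨fun ⟨g, hg⟩ => ?_, fun ⟨g, _, hg⟩ => ⟨g, hg⟩⟩
  have hg' : IsAdjointPair Ω Ω (Ω.leftAdjointOfNondegenerate hΩ g) g :=
    Ω.isAdjointPairLeftAdjointOfNondegenerate hΩ g
  obtain ⟨S, hSu, hS, hSM, hSB⟩ :=
    BilinForm.exists_sqrt_leftAdjointOfNondegenerate_mul_self hΩ hform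
      ((Module.End.isUnit_iff _).mpr g.bijective)
  set T : Module.End ℂ V := ↑hSu.unit⁻¹
  have hST (v : V) : S (T v) = v := LinearMap.congr_fun hSu.mul_val_inv v
  have hTB : Commute T B := Commute.units_inv_left <| by
    rw [hSu.unit_spec]
    exact hSB B (BilinForm.commute_leftAdjointOfNondegenerate_mul_self hΩ hA hB (LinearMap.ext hg))
  refine ⟨(GeneralLinearGroup.generalLinearEquiv ℂ V hSu.unit⁻¹).trans g, fun v w => ?_,
    fun v => ?_⟩ <;>
    simp only [LinearEquiv.trans_apply, GeneralLinearGroup.coeFn_generalLinearEquiv]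
  · calc Ω (g (T v)) (g (T w)) = Ω ((Ω.leftAdjointOfNondegenerate hΩ g * g) (T v)) (T w) :=
          (hg' _ _).symm
      _ = Ω (S v) (T w) := by rw [← hSM, sq, Module.End.mul_apply, hST]
      _ = Ω v w := by rw [hS, hST]
  · rw [← hg, ← Module.End.mul_apply, hTB.eq, Module.End.mul_apply]
end

section
/- Let V_n = ℂ² ⊗ ℂ[z]/(z^n) with the symplectic form (f̄₁, f̄₂) = Res_{z=0}((f₁,f₂)_T / z^n), where (·,·)_T is the ℂ[z]-bilinear extension of the standard symplectic form on T = ℂ². Then the Lie algebra of the stabilizer of multiplication by z in Sp(V_n) equals the truncated current algebra 𝔰𝔩₂[z]/z^n 𝔰𝔩₂[z], acting on V_n via the vector representation. -/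
/-!
A `ℂ`-linear endomorphism of `V_n` commuting with `z` commutes with all of `ℂ[z]/(z^n)`, which `z`
generates, so it is multiplication by a `2 × 2` matrix `M` over `ℂ[z]/(z^n)`. For such `M` and the
standard symplectic form `ω` on `(ℂ[z]/(z^n))²` one has `ω(Mv, w) + ω(v, Mw) = tr M · ω(v, w)`, so
antisymmetry for `res ∘ ω` says `res (tr M · a) = 0` for all `a`. The residue pairing is perfect
(`res (z^(n-1-i) c)` is the `i`-th coefficient of `c`), hence `tr M = 0`.
-/

open Polynomial Matrix

theorem LinearMap.map_smul_of_adjoin_eq_top {R A M : Type*} [CommSemiring R] [Semiring A]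
    [Algebra R A] [AddCommMonoid M] [Module R M] [Module A M] [IsScalarTower R A M]
    {s : Set A} (hs : Algebra.adjoin R s = ⊤) (φ : M →ₗ[R] M)
    (hφ : ∀ a ∈ s, ∀ x, φ (a • x) = a • φ x) (a : A) (x : M) : φ (a • x) = a • φ x := by
  induction (hs ▸ Algebra.mem_top : a ∈ Algebra.adjoin R s) using Algebra.adjoin_induction
    generalizing x with
  | mem a ha => exact hφ a ha x
  | algebraMap r => simp only [algebraMap_smul, map_smul]
  | add a b _ _ ha hb => simp only [add_smul, map_add, ha, hb]
  | mul a b _ _ ha hb => simp only [mul_smul, ha, hb]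

theorem exists_mulVec_eq_of_map_root_smul {R ι : Type*} [CommRing R] [Fintype ι] [DecidableEq ι]
    {f : R[X]} (ξ : (ι → AdjoinRoot f) →ₗ[R] (ι → AdjoinRoot f))
    (hξ : ∀ v, ξ (AdjoinRoot.root f • v) = AdjoinRoot.root f • ξ v) :
    ∃ M : Matrix ι ι (AdjoinRoot f), ∀ v, ξ v = M *ᵥ v := by
  let ξA : (ι → AdjoinRoot f) →ₗ[AdjoinRoot f] (ι → AdjoinRoot f) :=
    { ξ with
      map_smul' := ξ.map_smul_of_adjoin_eq_top AdjoinRoot.adjoinRoot_eq_top (by simpa using hξ) }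
  exact ⟨ξA.toMatrix', fun v => (ξA.toMatrix'_mulVec v).symm⟩

section Residue
variable {R : Type*} [CommRing R] {n : ℕ} {res : AdjoinRoot (X ^ n : R[X]) →ₗ[R] R}

theorem AdjoinRoot.res_root_pow (hn : 0 < n)
    (hres : ∀ k < n, res (root (X ^ n) ^ k) = if k = n - 1 then 1 else 0) (m : ℕ) :
    res (root (X ^ n : R[X]) ^ m) = if m = n - 1 then 1 else 0 := by
  rcases lt_or_ge m n with hm | hm
  · exact hres m hm
  · have hz : root (X ^ n : R[X]) ^ n = 0 := by simpa using eval₂_root (X ^ n : R[X])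
    rw [← pow_sub_mul_pow _ hm, hz, mul_zero, map_zero, if_neg (by omega)]

theorem AdjoinRoot.eq_zero_of_forall_res_mul_eq_zero [Nontrivial R]
    (hres : ∀ k < n, res (root (X ^ n) ^ k) = if k = n - 1 then 1 else 0)
    {c : AdjoinRoot (X ^ n : R[X])} (hc : ∀ a, res (a * c) = 0) : c = 0 := by
  let b := (powerBasis' (monic_X_pow (R := R) n)).basis
  refine b.ext_elem fun i => ?_
  have hi : (i : ℕ) < n := by simpa using i.isLt
  have hres_mul (j : Fin _) : res (root _ ^ (n - 1 - i) * root _ ^ (j : ℕ)) =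
      if j = i then 1 else 0 := by
    rw [← pow_add, res_root_pow (by omega) hres]
    exact if_congr (by omega) rfl rfl
  rw [map_zero, Finsupp.zero_apply, ← hc (root _ ^ (n - 1 - i))]
  conv_rhs => rw [← b.sum_repr c]
  simp only [b, PowerBasis.coe_basis, powerBasis'_gen, Finset.mul_sum, mul_smul_comm, map_sum,
    map_smul, hres_mul, smul_eq_mul, mul_ite, mul_one, mul_zero, Finset.sum_ite_eq',
    Finset.mem_univ, if_true]

end Residue

section SymplecticPairing
variable {A : Type*} [CommRing A]

def symplecticPairing (v w : Fin 2 → A) : A := v 0 * w 1 - v 1 * w 0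

theorem symplecticPairing_mulVec_add (M : Matrix (Fin 2) (Fin 2) A) (v w : Fin 2 → A) :
    symplecticPairing (M *ᵥ v) w + symplecticPairing v (M *ᵥ w) =
      M.trace * symplecticPairing v w := by
  simp only [symplecticPairing, mulVec, dotProduct, Fin.sum_univ_two, trace_fin_two]
  ring

theorem symplecticPairing_single_zero_single_one (a : A) :
    symplecticPairing (Pi.single 0 a) (Pi.single 1 1) = a := by
  simp [symplecticPairing]

end SymplecticPairing

theorem stabilizer_of_z_is_truncated_sl2_general
    (n : ℕ)
    (res : AdjoinRoot ((Polynomial.X : Polynomial ℂ) ^ n) →ₗ[ℂ] ℂ)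
    (hres : ∀ k < n, res (AdjoinRoot.root ((Polynomial.X : Polynomial ℂ) ^ n) ^ k) =
      if k = n - 1 then 1 else 0)
    (Bz : (Fin 2 → AdjoinRoot ((Polynomial.X : Polynomial ℂ) ^ n)) →ₗ[ℂ]
          (Fin 2 → AdjoinRoot ((Polynomial.X : Polynomial ℂ) ^ n)))
    (hBz : ∀ v i, Bz v i = AdjoinRoot.root ((Polynomial.X : Polynomial ℂ) ^ n) * v i) :
    ∀ ξ : (Fin 2 → AdjoinRoot ((Polynomial.X : Polynomial ℂ) ^ n)) →ₗ[ℂ]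
          (Fin 2 → AdjoinRoot ((Polynomial.X : Polynomial ℂ) ^ n)),
      ((∀ v w, res ((ξ v) 0 * w 1 - (ξ v) 1 * w 0) =
          -(res (v 0 * (ξ w) 1 - v 1 * (ξ w) 0))) ∧ ξ ∘ₗ Bz = Bz ∘ₗ ξ) ↔
      (∃ M : Matrix (Fin 2) (Fin 2) (AdjoinRoot ((Polynomial.X : Polynomial ℂ) ^ n)),
        M.trace = 0 ∧ ∀ v, ξ v = M.mulVec v) := by
  intro ξ
  have hBz' (v : Fin 2 → AdjoinRoot (X ^ n : ℂ[X])) : Bz v = AdjoinRoot.root (X ^ n : ℂ[X]) • v := by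
    ext i
    rw [hBz, Pi.smul_apply, smul_eq_mul]
  have hanti_iff (M : Matrix (Fin 2) (Fin 2) _) (hM : ∀ v, ξ v = M *ᵥ v) (v w) :
      res ((ξ v) 0 * w 1 - (ξ v) 1 * w 0) = -(res (v 0 * (ξ w) 1 - v 1 * (ξ w) 0)) ↔
        res (M.trace * symplecticPairing v w) = 0 := by
    rw [hM, hM, ← symplecticPairing_mulVec_add, map_add, add_eq_zero_iff_eq_neg]
    rfl
  constructor
  · rintro ⟨hanti, hcomm⟩
    obtain ⟨M, hM⟩ := exists_mulVec_eq_of_map_root_smul ξ fun v => by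
      simpa only [LinearMap.comp_apply, hBz'] using LinearMap.congr_fun hcomm v
    refine ⟨M, AdjoinRoot.eq_zero_of_forall_res_mul_eq_zero hres fun a => ?_, hM⟩
    have h := (hanti_iff M hM (Pi.single 0 a) (Pi.single 1 1)).1 (hanti _ _)
    rwa [symplecticPairing_single_zero_single_one, mul_comm] at h
  · rintro ⟨M, htr, hM⟩
    refine ⟨fun v w => (hanti_iff M hM v w).2 (by rw [htr, zero_mul, map_zero]),
      LinearMap.ext fun v => ?_⟩
    simp only [LinearMap.comp_apply, hBz', hM, mulVec_smul]

/-- Let `V_n = ℂ² ⊗ ℂ[z]/(z^n)` with the residue symplectic form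
`(f̄₁, f̄₂) = Res_{z=0}((f₁,f₂)_T / z^n)`, where `(·,·)_T` is the `ℂ[z]`-bilinear extension
of the standard symplectic form on `T = ℂ²`, and let `Bz` be multiplication by `z`.
Then the Lie algebra of the stabilizer of `Bz` in `Sp(V_n)`, i.e. the set of form-antisymmetric
`ℂ`-linear endomorphisms commuting with `Bz`, equals the truncated current algebra
`𝔰𝔩₂[z]/z^n𝔰𝔩₂[z]`, realized as the trace-free `2×2` matrices over `ℂ[z]/(z^n)` acting by
the vector representation. Here `ℂ[z]/(z^n)` is modelled as `AdjoinRoot (X^n)`, `res` is the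
linear functional reading off the coefficient of `z^(n-1)`. -/
theorem stabilizer_of_z_is_truncated_sl2
    (n : ℕ) (hn : 0 < n)
    (res : AdjoinRoot ((Polynomial.X : Polynomial ℂ) ^ n) →ₗ[ℂ] ℂ)
    (hres : ∀ k < n, res (AdjoinRoot.root ((Polynomial.X : Polynomial ℂ) ^ n) ^ k) =
      if k = n - 1 then 1 else 0)
    (Bz : (Fin 2 → AdjoinRoot ((Polynomial.X : Polynomial ℂ) ^ n)) →ₗ[ℂ]
          (Fin 2 → AdjoinRoot ((Polynomial.X : Polynomial ℂ) ^ n)))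
    (hBz : ∀ v i, Bz v i = AdjoinRoot.root ((Polynomial.X : Polynomial ℂ) ^ n) * v i) :
    ∀ ξ : (Fin 2 → AdjoinRoot ((Polynomial.X : Polynomial ℂ) ^ n)) →ₗ[ℂ]
          (Fin 2 → AdjoinRoot ((Polynomial.X : Polynomial ℂ) ^ n)),
      ((∀ v w, res ((ξ v) 0 * w 1 - (ξ v) 1 * w 0) =
          -(res (v 0 * (ξ w) 1 - v 1 * (ξ w) 0))) ∧ ξ ∘ₗ Bz = Bz ∘ₗ ξ) ↔
      (∃ M : Matrix (Fin 2) (Fin 2) (AdjoinRoot ((Polynomial.X : Polynomial ℂ) ^ n)),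
        M.trace = 0 ∧ ∀ v, ξ v = M.mulVec v) :=
  stabilizer_of_z_is_truncated_sl2_general n res hres Bz hBz
end

section
/- Let T = ℂ², n ≥ 1, 𝔤_n = 𝔰𝔩₂[z]/z^n𝔰𝔩₂[z] acting on 𝒱_n = Hom(ℂ^r, T ⊗ ℂ[z]/(z^n)) (r ≥ 2), and let x ∈ 𝒱_n with x₀ (the constant coefficient of x) of rank 1. Let ξ ∈ 𝔤_n^x be an element of the stabilizer whose minimal degree m_x is minimal among all elements of 𝔤_n^x. Then 𝔤_n^x = ℂ[z]·ξ; in particular dim 𝔤_n^x = n - m_x. -/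
/-!
Write `R = ℂ[z]/(z^n)` and `d = n - m_x`, so that `z^d` kills the whole stabilizer `S`. An element
of `S` killed by `z` is `z^(n-1) A` for a trace-free `A` over `ℂ` with `A x₀ = 0`, and since `x₀`
has rank one such `A` form a line in `𝔰𝔩₂`. Hence the socle of `S` is `ℂ z^(d-1) ξ`, and peeling
off leading terms shows by induction on the `z`-adic order that `S = R ξ`. Finally `R ξ` has the
`ℂ`-basis `ξ, z ξ, …, z^(d-1) ξ`.
-/

open Polynomial

theorem Module.End.linearIndependent_pow_apply {K M : Type*} [Field K] [AddCommGroup M]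
    [Module K M] (f : Module.End K M) {v : M} {d : ℕ} (hv : ∀ k, (f ^ k) v = 0 ↔ d ≤ k) :
    LinearIndependent K fun i : Fin d => (f ^ (i : ℕ)) v := by
  induction d generalizing v with
  | zero => exact linearIndependent_empty_type
  | succ d ih =>
    have hcons : (fun i : Fin (d + 1) => (f ^ (i : ℕ)) v) =
        Fin.cons v fun i : Fin d => (f ^ (i : ℕ)) (f v) := by
      funext i
      refine Fin.cases ?_ (fun i => ?_) i
      · simp
      · simp [pow_succ, Module.End.mul_apply]
    have hfv : ∀ k, (f ^ k) (f v) = 0 ↔ d ≤ k := fun k => by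
      rw [← Module.End.mul_apply, ← pow_succ, hv]; omega
    have hspan : Submodule.span K (Set.range fun i : Fin d => (f ^ (i : ℕ)) (f v)) ≤
        LinearMap.ker (f ^ d) := by
      rw [Submodule.span_le]
      rintro _ ⟨i, rfl⟩
      rw [SetLike.mem_coe, LinearMap.mem_ker, ← Module.End.mul_apply, ← pow_add, hfv]
      omega
    rw [hcons, linearIndependent_finCons]
    exact ⟨ih hfv, fun h => absurd ((hv d).1 (hspan h)) (by omega)⟩

theorem AdjoinRoot.span_root_pow_smul {K M : Type*} [Field K] [AddCommGroup M] [Module K M]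
    {f : K[X]} [Module (AdjoinRoot f) M] [IsScalarTower K (AdjoinRoot f) M] {v : M} {d : ℕ}
    (hv : root f ^ d • v = 0) :
    Submodule.span K (Set.range fun i : Fin d => root f ^ (i : ℕ) • v) =
      (AdjoinRoot f ∙ v).restrictScalars K := by
  apply le_antisymm
  · rw [Submodule.span_le]
    rintro _ ⟨i, rfl⟩
    exact Submodule.smul_mem _ _ (Submodule.mem_span_singleton_self v)
  · intro w hw
    obtain ⟨a, rfl⟩ :=
      Submodule.mem_span_singleton.1 ((Submodule.restrictScalars_mem _ _ _).1 hw)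
    obtain ⟨p, rfl⟩ := AdjoinRoot.mk_surjective a
    rw [← AdjoinRoot.aeval_eq, aeval_eq_sum_range, Finset.sum_smul]
    refine Submodule.sum_mem _ fun i _ => ?_
    rw [smul_assoc]
    refine Submodule.smul_mem _ _ ?_
    rcases lt_or_ge i d with hi | hi
    · exact Submodule.subset_span ⟨⟨i, hi⟩, rfl⟩
    · rw [← Nat.sub_add_cancel hi, pow_add, mul_smul, hv, smul_zero]
      exact Submodule.zero_mem _

theorem AdjoinRoot.finrank_restrictScalars_span_singleton {K M : Type*} [Field K]
    [AddCommGroup M] [Module K M] {f : K[X]} [Module (AdjoinRoot f) M]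
    [IsScalarTower K (AdjoinRoot f) M] {v : M} {d : ℕ} (hv : ∀ k, root f ^ k • v = 0 ↔ d ≤ k) :
    Module.finrank K ((AdjoinRoot f ∙ v).restrictScalars K) = d := by
  have hindep := (Algebra.lsmul K K M (root f)).linearIndependent_pow_apply (v := v)
    (by simpa [← map_pow] using hv)
  simp only [← map_pow, Algebra.lsmul_coe] at hindep
  rw [← span_root_pow_smul ((hv d).2 le_rfl), finrank_span_eq_card hindep, Fintype.card_fin]

theorem Submodule.eq_span_singleton_of_socle_le {R M : Type*} [CommRing R] [AddCommGroup M]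
    [Module R M] {S : Submodule R M} {ξ : M} {z : R} {d : ℕ} (hξ : ξ ∈ S)
    (hd : ∀ v ∈ S, z ^ d • v = 0) (hsoc : ∀ v ∈ S, z • v = 0 → v ∈ R ∙ (z ^ (d - 1) • ξ)) :
    S = R ∙ ξ := by
  refine le_antisymm (fun v hv => ?_) ((Submodule.span_singleton_le_iff_mem _ _).2 hξ)
  suffices h : ∀ k, ∀ v ∈ S, z ^ k • v = 0 → v ∈ R ∙ ξ from h d v hv (hd v hv)
  intro k
  induction k with
  | zero => intro v _ hv; simp_all
  | succ k ih =>
    intro v hv hkv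
    by_cases hkd : d ≤ k
    · refine ih v hv ?_
      rw [← Nat.sub_add_cancel hkd, pow_add, mul_smul, hd v hv, smul_zero]
    obtain ⟨a, ha⟩ := Submodule.mem_span_singleton.1 <|
      hsoc _ (S.smul_mem _ hv) (by rwa [smul_smul, ← pow_succ'])
    have hlead : z ^ (d - 1) • ξ = z ^ k • z ^ (d - 1 - k) • ξ := by
      rw [smul_smul, ← pow_add]; congr 2; omega
    set w := a • z ^ (d - 1 - k) • ξ
    have hw : w ∈ R ∙ ξ :=
      Submodule.smul_mem _ _ (Submodule.smul_mem _ _ (mem_span_singleton_self ξ))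
    have hvw : v - w ∈ R ∙ ξ := by
      refine ih _ (S.sub_mem hv (S.smul_mem _ (S.smul_mem _ hξ))) ?_
      rw [smul_sub, ← ha, hlead, smul_comm a]
      exact sub_self _
    simpa using add_mem hvw hw

namespace AdjoinRoot

variable {K : Type*} [Field K] {n : ℕ}

theorem root_X_pow_pow_self : root ((X : K[X]) ^ n) ^ n = 0 := by
  rw [← mk_X, ← map_pow, mk_self]

theorem root_X_pow_pow_ne_zero {k : ℕ} (hk : k < n) : root ((X : K[X]) ^ n) ^ k ≠ 0 := by
  rw [← mk_X, ← map_pow, Ne, mk_eq_zero]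
  exact fun h => absurd (natDegree_le_of_dvd h (pow_ne_zero _ X_ne_zero)) (by simpa using hk)

theorem exists_eq_root_X_pow_pow_pred_mul {a : AdjoinRoot ((X : K[X]) ^ n)}
    (ha : root _ * a = 0) : ∃ b, a = root ((X : K[X]) ^ n) ^ (n - 1) * b := by
  obtain ⟨g, rfl⟩ := mk_surjective a
  rw [← mk_X, ← map_mul, mk_eq_zero] at ha
  cases n with
  | zero => exact ⟨mk _ g, by simp⟩
  | succ n =>
    rw [pow_succ', mul_dvd_mul_iff_left X_ne_zero] at ha
    obtain ⟨q, rfl⟩ := ha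
    exact ⟨mk _ q, by simp [← mk_X]⟩

variable {c : AdjoinRoot ((X : K[X]) ^ n) →ₗ[K] K}

theorem root_X_pow_pow_pred_mul (hc : ∀ k < n, c (root _ ^ k) = if k = 0 then 1 else 0)
    (b : AdjoinRoot ((X : K[X]) ^ n)) :
    root ((X : K[X]) ^ n) ^ (n - 1) * b = c b • root ((X : K[X]) ^ n) ^ (n - 1) := by
  let pb := powerBasis' (monic_X_pow (R := K) n)
  suffices LinearMap.mulLeft K (root ((X : K[X]) ^ n) ^ (n - 1)) =
      c.smulRight (root ((X : K[X]) ^ n) ^ (n - 1)) from LinearMap.congr_fun this b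
  refine pb.basis.ext fun i => ?_
  have hi : (i : ℕ) < n := by simpa [pb] using i.isLt
  rw [pb.basis_eq_pow, LinearMap.mulLeft_apply, LinearMap.smulRight_apply, powerBasis'_gen,
    hc _ hi, ← pow_add]
  split_ifs with h0
  · simp [h0]
  · rw [zero_smul, pow_eq_zero_of_le (by omega) root_X_pow_pow_self]

theorem exists_eq_smul_root_X_pow_pow_pred
    (hc : ∀ k < n, c (root _ ^ k) = if k = 0 then 1 else 0) {a : AdjoinRoot ((X : K[X]) ^ n)}
    (ha : root _ * a = 0) : ∃ t : K, a = t • root ((X : K[X]) ^ n) ^ (n - 1) := by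
  obtain ⟨b, rfl⟩ := exists_eq_root_X_pow_pow_pred_mul ha
  exact ⟨c b, root_X_pow_pow_pred_mul hc b⟩

end AdjoinRoot

namespace Matrix

def traceFreeStabilizer {R : Type*} [CommRing R] {m ι : Type*} [Fintype m]
    (x : Matrix m ι R) : Submodule R (Matrix m m R) where
  carrier := {η | η.trace = 0 ∧ η * x = 0}
  add_mem' ha hb :=
    ⟨by rw [trace_add, ha.1, hb.1, add_zero], by rw [Matrix.add_mul, ha.2, hb.2, add_zero]⟩
  zero_mem' := by simp
  smul_mem' a η h := ⟨by simp [h.1], by simp [h.2]⟩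

theorem mem_traceFreeStabilizer {R : Type*} [CommRing R] {m ι : Type*} [Fintype m]
    {x : Matrix m ι R} {η : Matrix m m R} :
    η ∈ traceFreeStabilizer x ↔ η.trace = 0 ∧ η * x = 0 := Iff.rfl

variable {K : Type*} [Field K]

theorem eq_smul_vecMulVec_of_mulVec_eq_zero {A : Matrix (Fin 2) (Fin 2) K} {v : Fin 2 → K}
    (hv : v ≠ 0) (hAv : A *ᵥ v = 0) (hA : A.trace = 0) :
    ∃ s : K, A = s • vecMulVec v ![-v 1, v 0] := by
  have e0 : A 0 0 * v 0 + A 0 1 * v 1 = 0 := by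
    simpa [mulVec, dotProduct, Fin.sum_univ_two] using congrFun hAv 0
  have e1 : A 1 0 * v 0 + A 1 1 * v 1 = 0 := by
    simpa [mulVec, dotProduct, Fin.sum_univ_two] using congrFun hAv 1
  have e2 : A 0 0 + A 1 1 = 0 := by simpa [trace, Fin.sum_univ_two] using hA
  by_cases h0 : v 0 = 0
  · have h1 : v 1 ≠ 0 := fun h1 => hv (funext fun i => by fin_cases i <;> simp [h0, h1])
    have hA01 : A 0 1 = 0 := by simpa [h0, h1] using e0
    have hA11 : A 1 1 = 0 := by simpa [h0, h1] using e1
    have hA00 : A 0 0 = 0 := by linear_combination e2 - hA11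
    refine ⟨-A 1 0 / v 1 ^ 2, ?_⟩
    ext i j
    fin_cases i <;> fin_cases j <;> simp [vecMulVec, h0, hA00, hA01, hA11]
    field_simp
  · refine ⟨A 0 1 / v 0 ^ 2, ?_⟩
    ext i j
    fin_cases i <;> fin_cases j <;> simp [vecMulVec] <;> field_simp
    · linear_combination e0
    · linear_combination v 0 * e1 + v 1 * e0 - v 0 * v 1 * e2
    · linear_combination v 0 * e2 - e0

theorem exists_eq_smul_of_mem_traceFreeStabilizer {r : ℕ} {x : Matrix (Fin 2) (Fin r) K}
    (hx : x ≠ 0) {A B : Matrix (Fin 2) (Fin 2) K} (hA : A ∈ traceFreeStabilizer x)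
    (hB : B ∈ traceFreeStabilizer x) (hB0 : B ≠ 0) : ∃ t : K, A = t • B := by
  obtain ⟨i, j, hij⟩ : ∃ i j, x i j ≠ 0 := by
    contrapose! hx
    exact ext hx
  have hv : xᵀ j ≠ 0 := fun h => hij (congrFun h i)
  have hcol {C : Matrix (Fin 2) (Fin 2) K} (hC : C * x = 0) : C *ᵥ xᵀ j = 0 := by
    funext k
    simpa [mulVec, dotProduct, mul_apply] using congrFun (congrFun hC k) j
  obtain ⟨s, rfl⟩ := eq_smul_vecMulVec_of_mulVec_eq_zero hv (hcol hA.2) hA.1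
  obtain ⟨t, rfl⟩ := eq_smul_vecMulVec_of_mulVec_eq_zero hv (hcol hB.2) hB.1
  have ht : t ≠ 0 := by rintro rfl; exact hB0 (zero_smul _ _)
  exact ⟨s / t, by rw [smul_smul, div_mul_cancel₀ _ ht]⟩

open AdjoinRoot

variable {n : ℕ} {c : AdjoinRoot ((X : K[X]) ^ n) →ₗ[K] K} {m ι : Type*}

theorem exists_eq_map_smul_root_X_pow_pow_pred
    (hc : ∀ k < n, c (root _ ^ k) = if k = 0 then 1 else 0)
    {N : Matrix m ι (AdjoinRoot ((X : K[X]) ^ n))} (hN : root ((X : K[X]) ^ n) • N = 0) :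
    ∃ A : Matrix m ι K, N = A.map (· • root ((X : K[X]) ^ n) ^ (n - 1)) := by
  choose A hA using fun i j =>
    exists_eq_smul_root_X_pow_pow_pred hc (congrFun (congrFun hN i) j)
  exact ⟨of A, ext hA⟩

theorem map_smul_root_X_pow_pow_pred_mem_traceFreeStabilizer_iff [Fintype m] (hn : 0 < n)
    (hc : ∀ k < n, c (root _ ^ k) = if k = 0 then 1 else 0) {A : Matrix m m K}
    {x : Matrix m ι (AdjoinRoot ((X : K[X]) ^ n))} :
    A.map (· • root ((X : K[X]) ^ n) ^ (n - 1)) ∈ traceFreeStabilizer x ↔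
      A ∈ traceFreeStabilizer (x.map c) := by
  set e := LinearMap.toSpanSingleton K _ (root ((X : K[X]) ^ n) ^ (n - 1))
  have he : Function.Injective e := smul_left_injective K (root_X_pow_pow_ne_zero (by omega))
  have hmap {B : Matrix m ι K} : B.map e = 0 ↔ B = 0 := by
    rw [← (map_injective he).eq_iff, Matrix.map_zero _ (map_zero e)]
  have htrace : (A.map e).trace = e A.trace := (AddMonoidHom.map_trace e A).symm
  have hmul : A.map e * x = (A * x.map c).map e := by
    ext i j
    simp [e, mul_apply, root_X_pow_pow_pred_mul hc, mul_smul]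
  simp only [mem_traceFreeStabilizer]
  rw [show A.map (· • root ((X : K[X]) ^ n) ^ (n - 1)) = A.map e from rfl, htrace, hmul, hmap,
    he.eq_iff' (map_zero e)]

theorem exists_eq_smul_of_root_smul_eq_zero (hn : 0 < n)
    (hc : ∀ k < n, c (root _ ^ k) = if k = 0 then 1 else 0) {r : ℕ}
    {x : Matrix (Fin 2) (Fin r) (AdjoinRoot ((X : K[X]) ^ n))} (hx : x.map c ≠ 0)
    {η ζ : Matrix (Fin 2) (Fin 2) (AdjoinRoot ((X : K[X]) ^ n))}
    (hη : η ∈ traceFreeStabilizer x) (hζ : ζ ∈ traceFreeStabilizer x)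
    (hzη : root ((X : K[X]) ^ n) • η = 0) (hzζ : root ((X : K[X]) ^ n) • ζ = 0) (hζ0 : ζ ≠ 0) :
    ∃ t : K, η = t • ζ := by
  obtain ⟨A, rfl⟩ := exists_eq_map_smul_root_X_pow_pow_pred hc hzη
  obtain ⟨B, rfl⟩ := exists_eq_map_smul_root_X_pow_pow_pred hc hzζ
  rw [map_smul_root_X_pow_pow_pred_mem_traceFreeStabilizer_iff hn hc] at hη hζ
  obtain ⟨t, rfl⟩ :=
    exists_eq_smul_of_mem_traceFreeStabilizer hx hη hζ (by rintro rfl; simp at hζ0)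
  exact ⟨t, by ext i j; simp [mul_smul]⟩

end Matrix

theorem stabilizer_cyclic_rank_one_general
    (n : ℕ) (r : ℕ)
    (c0 : AdjoinRoot ((Polynomial.X : Polynomial ℂ) ^ n) →ₗ[ℂ] ℂ)
    (hc0 : ∀ k < n, c0 (AdjoinRoot.root ((Polynomial.X : Polynomial ℂ) ^ n) ^ k) =
      if k = 0 then 1 else 0)
    (x : Matrix (Fin 2) (Fin r) (AdjoinRoot ((Polynomial.X : Polynomial ℂ) ^ n)))
    (hx : (x.map ⇑c0).rank = 1)
    (ξ : Matrix (Fin 2) (Fin 2) (AdjoinRoot ((Polynomial.X : Polynomial ℂ) ^ n)))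
    (m_x : ℕ)
    (hξtrace : ξ.trace = 0) (hξann : ξ * x = 0)
    (hξdeg : (AdjoinRoot.root ((Polynomial.X : Polynomial ℂ) ^ n)) ^ (n - m_x) • ξ = 0)
    (hξdeg' : ∀ m ≤ n,
      (AdjoinRoot.root ((Polynomial.X : Polynomial ℂ) ^ n)) ^ (n - m) • ξ = 0 → m ≤ m_x)
    (hmin : ∀ η : Matrix (Fin 2) (Fin 2) (AdjoinRoot ((Polynomial.X : Polynomial ℂ) ^ n)),
      η.trace = 0 → η * x = 0 →
      (AdjoinRoot.root ((Polynomial.X : Polynomial ℂ) ^ n)) ^ (n - m_x) • η = 0) :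
    (∀ η : Matrix (Fin 2) (Fin 2) (AdjoinRoot ((Polynomial.X : Polynomial ℂ) ^ n)),
      (η.trace = 0 ∧ η * x = 0) ↔
      ∃ p : AdjoinRoot ((Polynomial.X : Polynomial ℂ) ^ n), η = p • ξ) ∧
    Module.finrank ℂ ↥(Submodule.span ℂ
      {η : Matrix (Fin 2) (Fin 2) (AdjoinRoot ((Polynomial.X : Polynomial ℂ) ^ n)) |
        η.trace = 0 ∧ η * x = 0}) = n - m_x := by
  set z := AdjoinRoot.root ((X : ℂ[X]) ^ n)
  have hord : ∀ k, z ^ k • ξ = 0 ↔ n - m_x ≤ k := fun k => by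
    refine ⟨fun hk => ?_, fun hk => ?_⟩
    · by_contra hlt
      have := hξdeg' (n - k) (by omega) (by rwa [Nat.sub_sub_self (by omega)])
      omega
    · rw [← Nat.sub_add_cancel hk, pow_add, mul_smul, hξdeg, smul_zero]
  have hx0 : x.map c0 ≠ 0 := fun h => by simp [h] at hx
  have hS : Matrix.traceFreeStabilizer x = AdjoinRoot ((X : ℂ[X]) ^ n) ∙ ξ := by
    refine Submodule.eq_span_singleton_of_socle_le ⟨hξtrace, hξann⟩
      (fun v hv => hmin v hv.1 hv.2) fun v hv hzv => ?_
    rcases Nat.eq_zero_or_pos (n - m_x) with hd | hd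
    · rw [show v = 0 by simpa [hd] using hmin v hv.1 hv.2]
      exact Submodule.zero_mem _
    obtain ⟨t, rfl⟩ := Matrix.exists_eq_smul_of_root_smul_eq_zero (by omega) hc0 hx0 hv
      (Submodule.smul_mem _ _ ⟨hξtrace, hξann⟩) hzv
      (by rw [smul_smul, ← pow_succ', Nat.sub_add_cancel hd, (hord _).2 le_rfl])
      (by rw [Ne, hord]; omega)
    exact Submodule.smul_of_tower_mem _ t (Submodule.mem_span_singleton_self _)
  refine ⟨fun η => ?_, ?_⟩
  · rw [← Matrix.mem_traceFreeStabilizer, hS, Submodule.mem_span_singleton]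
    exact exists_congr fun p => eq_comm
  · rw [← AdjoinRoot.finrank_restrictScalars_span_singleton hord, ← hS,
      ← Submodule.span_coe_eq_restrictScalars]
    rfl

/-- Let `𝔤_n = 𝔰𝔩₂[z]/z^n𝔰𝔩₂[z]` act on `𝒱_n = Hom(ℂ^r, T ⊗ ℂ[z]/(z^n))`
(`T = ℂ²`, `r ≥ 2`), realized as trace-free `2×2` matrices acting by left multiplication on
`2×r` matrices over `R = ℂ[z]/(z^n)` (modelled as `AdjoinRoot (X^n)`). Let `x ∈ 𝒱_n` whose
constant coefficient `x₀` has rank 1, and let `ξ ∈ 𝔤_n^x` with minimal degree `m_x`, minimal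
among all elements of the stabilizer `𝔤_n^x = {η | η x = 0}`. (Here `min.deg η ≥ m` iff
`z^{n-m}·η = 0`.) Then `𝔤_n^x = ℂ[z]·ξ`; in particular `dim 𝔤_n^x = n - m_x`. -/
theorem stabilizer_cyclic_rank_one
    (n : ℕ) (hn : 0 < n) (r : ℕ) (hr : 2 ≤ r)
    (c0 : AdjoinRoot ((Polynomial.X : Polynomial ℂ) ^ n) →ₗ[ℂ] ℂ)
    (hc0 : ∀ k < n, c0 (AdjoinRoot.root ((Polynomial.X : Polynomial ℂ) ^ n) ^ k) =
      if k = 0 then 1 else 0)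
    (x : Matrix (Fin 2) (Fin r) (AdjoinRoot ((Polynomial.X : Polynomial ℂ) ^ n)))
    (hx : (x.map ⇑c0).rank = 1)
    (ξ : Matrix (Fin 2) (Fin 2) (AdjoinRoot ((Polynomial.X : Polynomial ℂ) ^ n)))
    (m_x : ℕ) (hm : m_x ≤ n)
    (hξtrace : ξ.trace = 0) (hξann : ξ * x = 0)
    (hξdeg : (AdjoinRoot.root ((Polynomial.X : Polynomial ℂ) ^ n)) ^ (n - m_x) • ξ = 0)
    (hξdeg' : ∀ m ≤ n,
      (AdjoinRoot.root ((Polynomial.X : Polynomial ℂ) ^ n)) ^ (n - m) • ξ = 0 → m ≤ m_x)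
    (hmin : ∀ η : Matrix (Fin 2) (Fin 2) (AdjoinRoot ((Polynomial.X : Polynomial ℂ) ^ n)),
      η.trace = 0 → η * x = 0 →
      (AdjoinRoot.root ((Polynomial.X : Polynomial ℂ) ^ n)) ^ (n - m_x) • η = 0) :
    (∀ η : Matrix (Fin 2) (Fin 2) (AdjoinRoot ((Polynomial.X : Polynomial ℂ) ^ n)),
      (η.trace = 0 ∧ η * x = 0) ↔
      ∃ p : AdjoinRoot ((Polynomial.X : Polynomial ℂ) ^ n), η = p • ξ) ∧
    Module.finrank ℂ ↥(Submodule.span ℂ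
      {η : Matrix (Fin 2) (Fin 2) (AdjoinRoot ((Polynomial.X : Polynomial ℂ) ^ n)) |
        η.trace = 0 ∧ η * x = 0}) = n - m_x :=
  stabilizer_cyclic_rank_one_general n r c0 hc0 x hx ξ m_x hξtrace hξann hξdeg hξdeg' hmin
end
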